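/- arXiv:1707.03928 — 7 statements merged into one kernel-verified Lean document; each statement's English description precedes it below -/
import Mathlib

section
/- Let n be a positive integer and let A = {a_1, a_2, …, a_n} be a set of n distinct positive integers with a_1 + a_2 + … + a_n = n². Then A is an extremal Skolem set (i.e., the set {1, 2, …, 2n} can be partitioned into n pairs (s_i, t_i) with t_i − s_i = a_i for i = 1, …, n) if and only if there exists a permutation π of {1, …, n} whose diagonal X-ray d(π) = (d_1, …, d_{2n−1}) satisfies d_k = 1 if k ∈ A and d_k = 0 otherwise. -/
/-- The multiset of all endpoints of the pairs `(s i, t i)`. -/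
def pairsMultiset (n : ℕ) (s t : Fin n → ℕ) : Multiset ℕ :=
  (Finset.univ : Finset (Fin n)).val.bind fun i => {s i, t i}

/-- The pairs `(s i, t i)` form a partition of `{1, 2, …, 2n}`. -/
def IsPartitionOfIcc (n : ℕ) (s t : Fin n → ℕ) : Prop :=
  pairsMultiset n s t = Multiset.map (· + 1) (Multiset.range (2 * n))

/-- The `k`-th entry (`k = 1, …, 2n-1`) of the diagonal (Toeplitz) X-ray of a
permutation `π` of `{1, …, n}` (encoded 0-based on `Fin n`):
`d_k = #{i : i - π(i) = n - k}`. -/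
def diagXray (n : ℕ) (π : Equiv.Perm (Fin n)) (k : ℤ) : ℕ :=
  (Finset.univ.filter fun i : Fin n =>
    ((i : ℕ) : ℤ) - ((π i : ℕ) : ℤ) = (n : ℤ) - k).card


/-!
In an extremal Skolem pairing of `{1, …, 2n}` the left ends are exactly `1, …, n` and the right
ends exactly `n + 1, …, 2n`: the left ends are `n` distinct positive integers, and `∑ aᵢ = n²`
forces their sum down to `n (n + 1) / 2`. Such pairings therefore correspond to permutations `π`
with `π (sᵢ - 1) = tᵢ - n - 1`, and then `aᵢ = tᵢ - sᵢ` is the index `n + π j - j` of the diagonal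
through row `j = sᵢ - 1`. As `a` is injective, the X-ray condition says exactly that the multiset
of these diagonal indices is `{a₁, …, aₙ}`.
-/

open Finset Function

theorem Multiset.eq_of_count_eq_on_of_card_le {α : Type*} [DecidableEq α] {M N : Multiset α}
    {S : Set α} (hM : ∀ x ∈ M, x ∈ S) (h : ∀ x ∈ S, M.count x = N.count x)
    (hcard : N.card ≤ M.card) : M = N := by
  refine Multiset.eq_of_le_of_card_le (Multiset.le_iff_count.2 fun x => ?_) hcard
  by_cases hx : x ∈ S
  · exact (h x hx).le
  · simp [Multiset.count_eq_zero.2 fun hxM => hx (hM x hxM)]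

theorem Function.Injective.exists_perm_comp_eq {α β : Type*} [Fintype α] {f g : α → β}
    (hf : Injective f) (h : univ.val.map f = univ.val.map g) : ∃ σ : Equiv.Perm α, g ∘ σ = f := by
  have hmem (i : α) : ∃ j, g j = f i := by
    have hfi : f i ∈ univ.val.map g := h ▸ Multiset.mem_map_of_mem f (mem_univ i)
    simpa using hfi
  choose σ hσ using hmem
  have hσ_inj : Injective σ := fun i j hij => hf (by rw [← hσ i, ← hσ j, hij])
  exact ⟨Equiv.ofBijective σ hσ_inj.bijective_of_finite, funext hσ⟩

theorem Fin.univ_val_map_perm {n : ℕ} (σ : Equiv.Perm (Fin n)) (g : ℕ → ℕ) :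
    univ.val.map (fun i => g (σ i)) = (Multiset.range n).map g := by
  have hval : univ.val.map (Fin.val : Fin n → ℕ) = Multiset.range n := by
    rw [Fin.univ_val_map, List.ofFn_eq_map, List.map_coe_finRange_eq_range]; rfl
  calc univ.val.map (fun i => g (σ i)) = (univ.val.map σ).map (g ∘ Fin.val) := by
        rw [Multiset.map_map]; rfl
    _ = (Multiset.range n).map g := by rw [Multiset.map_univ_val_equiv, ← Multiset.map_map, hval]

theorem Finset.sum_Icc_one_id_mul_two (m : ℕ) : (∑ i ∈ Icc 1 m, i) * 2 = m * (m + 1) := by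
  induction m with
  | zero => simp
  | succ m ih =>
    rw [← insert_Icc_right_eq_Icc_add_one (by omega), sum_insert (by simp), add_mul, ih]
    ring

theorem Finset.eq_Icc_one_card_of_sum_le {S : Finset ℕ} (h0 : 0 ∉ S)
    (hsum : (∑ x ∈ S, x) * 2 ≤ #S * (#S + 1)) : S = Icc 1 #S := by
  induction hm : #S generalizing S with
  | zero => simpa using hm
  | succ m ih =>
    rw [hm] at hsum
    have hne : S.Nonempty := card_pos.mp (by omega)
    set M := S.max' hne
    have hMS : M ∈ S := S.max'_mem hne
    have hS_sub : S ⊆ Icc 1 M := fun x hx =>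
      mem_Icc.2 ⟨Nat.pos_of_ne_zero fun h => h0 (h ▸ hx), S.le_max' x hx⟩
    have hM_ge : m + 1 ≤ M := by simpa [hm] using card_le_card hS_sub
    have herase_sum : ∑ x ∈ S.erase M, x + M = ∑ x ∈ S, x := sum_erase_add S (fun x => x) hMS
    have hcard : #(S.erase M) = m := by rw [card_erase_of_mem hMS, hm]; rfl
    have herase : S.erase M = Icc 1 m := by
      refine ih (fun h => h0 (mem_of_mem_erase h)) ?_ hcard
      rw [hcard]
      linarith
    have hgauss := sum_Icc_one_id_mul_two m
    rw [herase] at herase_sum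
    have hM : M = m + 1 := by linarith
    rw [← insert_erase hMS, herase, hM, insert_Icc_right_eq_Icc_add_one (by omega)]

theorem pairsMultiset_eq (n : ℕ) (s t : Fin n → ℕ) :
    pairsMultiset n s t = univ.val.map s + univ.val.map t := by
  simp only [pairsMultiset, Multiset.insert_eq_cons, ← Multiset.singleton_add, Multiset.bind_add,
    Multiset.bind_singleton]

theorem isPartitionOfIcc_of_perm {n : ℕ} (σ τ : Equiv.Perm (Fin n)) :
    IsPartitionOfIcc n (fun i => σ i + 1) (fun i => τ i + (n + 1)) := by
  rw [IsPartitionOfIcc, pairsMultiset_eq, Fin.univ_val_map_perm σ (· + 1),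
    Fin.univ_val_map_perm τ (· + (n + 1)), two_mul, Multiset.range_add, Multiset.map_add,
    Multiset.map_map]
  congr 2
  funext i
  simp only [Function.comp_apply]
  omega

theorem exists_perm_of_injective_of_mem_Ico {n c : ℕ} {f : Fin n → ℕ} (hf : Injective f)
    (hbound : ∀ i, f i ∈ Ico c (c + n)) : ∃ σ : Equiv.Perm (Fin n), ∀ i, f i = σ i + c := by
  let σ (i : Fin n) : Fin n := ⟨f i - c, by have := mem_Ico.1 (hbound i); omega⟩
  have hσ (i : Fin n) : f i = σ i + c := by have := mem_Ico.1 (hbound i); simp only [σ]; omega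
  have hσ_inj : Injective σ := fun i j hij => hf (by rw [hσ i, hσ j, hij])
  exact ⟨Equiv.ofBijective σ hσ_inj.bijective_of_finite, hσ⟩

namespace IsPartitionOfIcc

variable {n : ℕ} {s t : Fin n → ℕ}

theorem map_add_map (h : IsPartitionOfIcc n s t) :
    univ.val.map s + univ.val.map t = (Multiset.range (2 * n)).map (· + 1) :=
  (pairsMultiset_eq n s t).symm.trans h

theorem nodup (h : IsPartitionOfIcc n s t) : (univ.val.map s + univ.val.map t).Nodup := by
  rw [h.map_add_map]
  exact (Multiset.nodup_range _).map (add_left_injective 1)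

theorem injective_left (h : IsPartitionOfIcc n s t) : Injective s :=
  Fintype.nodup_map_univ_iff_injective.1 (Multiset.nodup_add.1 h.nodup).1

theorem injective_right (h : IsPartitionOfIcc n s t) : Injective t :=
  Fintype.nodup_map_univ_iff_injective.1 (Multiset.nodup_add.1 h.nodup).2.1

theorem right_ne_left (h : IsPartitionOfIcc n s t) (i j : Fin n) : t i ≠ s j := fun hij =>
  Multiset.disjoint_left.1 (Multiset.nodup_add.1 h.nodup).2.2
    (Multiset.mem_map_of_mem s (mem_univ j)) (hij ▸ Multiset.mem_map_of_mem t (mem_univ i))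

theorem mem_Icc_of_mem (h : IsPartitionOfIcc n s t) {x : ℕ}
    (hx : x ∈ univ.val.map s + univ.val.map t) : 1 ≤ x ∧ x ≤ 2 * n := by
  rw [h.map_add_map] at hx
  obtain ⟨m, hm, rfl⟩ := Multiset.mem_map.1 hx
  rw [Multiset.mem_range] at hm
  omega

theorem left_mem_Icc (h : IsPartitionOfIcc n s t) (i : Fin n) : s i ∈ Icc 1 (2 * n) :=
  mem_Icc.2 (h.mem_Icc_of_mem (Multiset.mem_add.2 (.inl (Multiset.mem_map_of_mem s (mem_univ i)))))

theorem right_mem_Icc (h : IsPartitionOfIcc n s t) (i : Fin n) : t i ∈ Icc 1 (2 * n) :=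
  mem_Icc.2 (h.mem_Icc_of_mem (Multiset.mem_add.2 (.inr (Multiset.mem_map_of_mem t (mem_univ i)))))

theorem sum_add_sum (h : IsPartitionOfIcc n s t) :
    (∑ i, s i + ∑ i, t i) * 2 = 2 * n * (2 * n + 1) := by
  have htotal : ∑ i, s i + ∑ i, t i = ∑ m ∈ range (2 * n), (m + 1) := by
    have := congrArg Multiset.sum h.map_add_map
    rwa [Multiset.sum_add] at this
  have hgauss := sum_range_succ' (fun m => m) (2 * n)
  rw [htotal, ← add_zero (∑ m ∈ range (2 * n), (m + 1)), ← hgauss, sum_range_id_mul_two,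
    Nat.add_sub_cancel, mul_comm]

theorem image_left_eq_Icc (h : IsPartitionOfIcc n s t) (hsum : ∑ i, s i + n ^ 2 = ∑ i, t i) :
    univ.image s = Icc 1 n := by
  have hcard : #(univ.image s) = n := by
    rw [card_image_of_injective _ h.injective_left, card_univ, Fintype.card_fin]
  have h0 : 0 ∉ univ.image s := by
    simp only [mem_image, mem_univ, true_and, not_exists]
    exact fun i hi => by simpa [hi] using h.left_mem_Icc i
  have htotal := h.sum_add_sum
  refine (eq_Icc_one_card_of_sum_le h0 ?_).trans (by rw [hcard])
  rw [sum_image h.injective_left.injOn, hcard]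
  linarith

theorem exists_perm (h : IsPartitionOfIcc n s t) (hsum : ∑ i, s i + n ^ 2 = ∑ i, t i) :
    ∃ σ τ : Equiv.Perm (Fin n), ∀ i, s i = σ i + 1 ∧ t i = τ i + (n + 1) := by
  have himage := h.image_left_eq_Icc hsum
  have hs (i : Fin n) : s i ∈ Icc 1 n := himage ▸ mem_image_of_mem s (mem_univ i)
  have ht (i : Fin n) : n < t i := by
    by_contra hle
    have hti : t i ∈ univ.image s := by
      rw [himage, mem_Icc]
      have := mem_Icc.1 (h.right_mem_Icc i)
      omega
    obtain ⟨j, -, hj⟩ := mem_image.1 hti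
    exact h.right_ne_left i j hj.symm
  obtain ⟨σ, hσ⟩ := exists_perm_of_injective_of_mem_Ico h.injective_left (c := 1) fun i => by
    have := mem_Icc.1 (hs i); rw [mem_Ico]; omega
  obtain ⟨τ, hτ⟩ := exists_perm_of_injective_of_mem_Ico h.injective_right (c := n + 1) fun i => by
    have := mem_Icc.1 (h.right_mem_Icc i); have := ht i; rw [mem_Ico]; omega
  exact ⟨σ, τ, fun i => ⟨hσ i, hτ i⟩⟩

end IsPartitionOfIcc

def diagIndex {n : ℕ} (π : Equiv.Perm (Fin n)) (i : Fin n) : ℕ := n + π i - i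

theorem diagIndex_mem_Icc {n : ℕ} (π : Equiv.Perm (Fin n)) (i : Fin n) :
    diagIndex π i ∈ Icc 1 (2 * n - 1) := by
  have := i.isLt; have := (π i).isLt
  rw [diagIndex, mem_Icc]
  omega

theorem diagXray_eq_count {n : ℕ} (π : Equiv.Perm (Fin n)) (k : ℕ) :
    diagXray n π k = (univ.val.map (diagIndex π)).count k := by
  rw [Multiset.count_map, diagXray, card_def, filter_val]
  congr 1
  refine Multiset.filter_congr fun i _ => ?_
  have := i.isLt; have := (π i).isLt
  rw [diagIndex]
  omega

theorem diagXray_eq_indicator_iff {n : ℕ} {a : Fin n → ℕ} (ha : Injective a)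
    (π : Equiv.Perm (Fin n)) :
    (∀ k : ℕ, 1 ≤ k → k ≤ 2 * n - 1 → diagXray n π k = if ∃ i, a i = k then 1 else 0) ↔
      univ.val.map (diagIndex π) = univ.val.map a := by
  have hcount (k : ℕ) : (if ∃ i, a i = k then 1 else 0) = (univ.val.map a).count k := by
    rw [Multiset.count_eq_of_nodup (Fintype.nodup_map_univ_iff_injective.2 ha)]
    simp
  simp only [diagXray_eq_count, hcount]
  refine ⟨fun h => ?_, fun h k _ _ => by rw [h]⟩
  refine Multiset.eq_of_count_eq_on_of_card_le (S := Set.Icc 1 (2 * n - 1)) ?_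
    (fun k hk => h k hk.1 hk.2) (by simp)
  intro x hx
  obtain ⟨i, -, rfl⟩ := Multiset.mem_map.1 hx
  exact mem_Icc.1 (diagIndex_mem_Icc π i)

theorem stmt0_general (n : ℕ) (a : Fin n → ℕ)
    (ha_inj : Function.Injective a)
    (ha_sum : ∑ i, a i = n ^ 2) :
    (∃ s t : Fin n → ℕ, IsPartitionOfIcc n s t ∧ ∀ i, t i = s i + a i) ↔
      ∃ π : Equiv.Perm (Fin n), ∀ k : ℕ, 1 ≤ k → k ≤ 2 * n - 1 →
        diagXray n π k = if ∃ i, a i = k then 1 else 0 := by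
  simp only [diagXray_eq_indicator_iff ha_inj]
  constructor
  · rintro ⟨s, t, hst, hts⟩
    have hsum : ∑ i, s i + n ^ 2 = ∑ i, t i := by
      rw [← ha_sum, ← sum_add_distrib]
      exact sum_congr rfl fun i _ => (hts i).symm
    obtain ⟨σ, τ, hστ⟩ := hst.exists_perm hsum
    have hdiag : diagIndex (σ.symm.trans τ) ∘ σ = a := funext fun i => by
      have := hστ i; have := hts i
      simp only [comp_apply, diagIndex, Equiv.trans_apply, Equiv.symm_apply_apply]
      omega
    exact ⟨σ.symm.trans τ, by rw [← hdiag, ← Multiset.map_map, Multiset.map_univ_val_equiv]⟩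
  · rintro ⟨π, hπ⟩
    obtain ⟨σ, hσ⟩ := ha_inj.exists_perm_comp_eq hπ.symm
    refine ⟨_, _, isPartitionOfIcc_of_perm σ (σ.trans π), fun i => ?_⟩
    have hi := congrFun hσ i
    have := (σ i).isLt
    simp only [comp_apply, diagIndex] at hi
    simp only [Equiv.trans_apply]
    omega

theorem stmt0 (n : ℕ) (hn : 0 < n) (a : Fin n → ℕ)
    (ha_pos : ∀ i, 0 < a i) (ha_inj : Function.Injective a)
    (ha_sum : ∑ i, a i = n ^ 2) :
    (∃ s t : Fin n → ℕ, IsPartitionOfIcc n s t ∧ ∀ i, t i = s i + a i) ↔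
      ∃ π : Equiv.Perm (Fin n), ∀ k : ℕ, 1 ≤ k → k ≤ 2 * n - 1 →
        diagXray n π k = if ∃ i, a i = k then 1 else 0 :=
  stmt0_general n a ha_inj ha_sum
end

section
/- Let n be a positive integer and let A = {a_1, a_2, …, a_n} be a multiset of positive integers with a_1 + a_2 + … + a_n = n². Then the number of partitions of {1, 2, …, 2n} into n pairs (s_i, t_i) with s_i < t_i whose differences t_i − s_i form the multiset A equals the number of permutations π of {1, …, n} such that for every k ∈ {1, …, 2n−1} the entry d_k of the diagonal X-ray d(π) equals the multiplicity of k in A. -/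
/-- The partitions of `{1, …, 2n}` into `n` pairs `(s, t)` with `s < t` whose
differences `t - s` form the multiset `A`.  A partition is encoded as the finset
of its pairs, each pair written with the smaller element first. -/
def skolemPartitions (n : ℕ) (A : Multiset ℕ) : Set (Finset (ℕ × ℕ)) :=
  {P | (∀ p ∈ P, p.1 < p.2) ∧
    P.val.bind (fun p => {p.1, p.2}) = Multiset.map (· + 1) (Multiset.range (2 * n)) ∧
    P.val.map (fun p => p.2 - p.1) = A}

/-!
In a partition with differences summing to `n²`, the smaller elements `s_i` and the larger
elements `t_i` satisfy `∑ t_i - ∑ s_i = n²` and `∑ s_i + ∑ t_i = n(2n+1)`, so the `s_i` are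
`n` distinct positive integers with sum `n(n+1)/2`, the least possible. Hence
`{s_i} = {1, …, n}`, `{t_i} = {n+1, …, 2n}`, and the partition is the graph
`i + 1 ↦ n + π i + 1` of a permutation `π`, whose differences `n + π i - i` are counted,
diagonal by diagonal, by the X-ray of `π`.
-/

open Finset

theorem Multiset.bind_pair {α β : Type*} (s : Multiset α) (f g : α → β) :
    s.bind (fun a => {f a, g a}) = s.map f + s.map g := by
  simp [Multiset.insert_eq_cons, Multiset.bind_cons, Multiset.bind_singleton]

namespace Finset

theorem card_lt_of_forall_lt_of_pos {s : Finset ℕ} {a : ℕ} (hs : ∀ x ∈ insert a s, 0 < x)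
    (hlt : ∀ x ∈ s, x < a) : #s < a := by
  have hsub : s ⊆ Ioo 0 a := fun x hx => mem_Ioo.mpr ⟨hs x (mem_insert_of_mem hx), hlt x hx⟩
  have hcard := card_le_card hsub
  have ha := hs a (mem_insert_self a s)
  rw [Nat.card_Ioo] at hcard
  omega

theorem sum_range_succ_le_sum {s : Finset ℕ} (hs : ∀ x ∈ s, 0 < x) :
    ∑ i ∈ range #s, (i + 1) ≤ ∑ x ∈ s, x := by
  induction s using Finset.induction_on_max with
  | empty => simp
  | insert a s hlt ih =>
    have ha : a ∉ s := fun h => (hlt a h).false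
    have hcard := card_lt_of_forall_lt_of_pos hs hlt
    have := ih fun x hx => hs x (mem_insert_of_mem hx)
    rw [card_insert_of_notMem ha, sum_range_succ, sum_insert ha]
    omega

theorem eq_map_range_of_sum_le {s : Finset ℕ} (hs : ∀ x ∈ s, 0 < x)
    (hsum : ∑ x ∈ s, x ≤ ∑ i ∈ range #s, (i + 1)) :
    s = (range #s).map (addRightEmbedding 1) := by
  induction s using Finset.induction_on_max with
  | empty => simp
  | insert a s hlt ih =>
    have ha : a ∉ s := fun h => (hlt a h).false
    have hs' : ∀ x ∈ s, 0 < x := fun x hx => hs x (mem_insert_of_mem hx)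
    have hcard := card_lt_of_forall_lt_of_pos hs hlt
    have hlow := sum_range_succ_le_sum hs'
    rw [card_insert_of_notMem ha, sum_range_succ, sum_insert ha] at hsum
    rw [card_insert_of_notMem ha, range_add_one, map_insert, ← ih hs' (by omega)]
    congr 1
    simp only [addRightEmbedding_apply]
    omega

end Finset

theorem Multiset.eq_map_range_of_sum_le {s : Multiset ℕ} (hs : s.Nodup)
    (hpos : ∀ x ∈ s, 0 < x) (hsum : s.sum ≤ ((range (card s)).map (· + 1)).sum) :
    s = (range (card s)).map (· + 1) := by
  have h := Finset.eq_map_range_of_sum_le (s := ⟨s, hs⟩) hpos (by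
    simpa [Finset.sum_mk, Finset.sum_eq_multiset_sum] using hsum)
  simpa using congrArg Finset.val h

theorem Fin.univ_val_map_val (n : ℕ) :
    (univ : Finset (Fin n)).val.map Fin.val = Multiset.range n := by
  simp [List.ofFn_eq_map, List.map_coe_finRange_eq_range, Multiset.coe_range]

section PermPairs

variable {n : ℕ}

def permPairs (n : ℕ) (π : Equiv.Perm (Fin n)) : Finset (ℕ × ℕ) :=
  univ.map ⟨fun i : Fin n => ((i : ℕ) + 1, n + (π i : ℕ) + 1), fun i j h =>
    Fin.ext (by simpa using congrArg Prod.fst h)⟩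

def displacements (n : ℕ) (π : Equiv.Perm (Fin n)) : Multiset ℕ :=
  univ.val.map fun i : Fin n => n + (π i : ℕ) - i

theorem permPairs_val (π : Equiv.Perm (Fin n)) :
    (permPairs n π).val = univ.val.map fun i : Fin n => ((i : ℕ) + 1, n + π i + 1) :=
  map_val _ _

theorem mem_permPairs {π : Equiv.Perm (Fin n)} {q : ℕ × ℕ} :
    q ∈ permPairs n π ↔ ∃ i : Fin n, ((i : ℕ) + 1, n + π i + 1) = q := by
  simp only [permPairs, mem_map, mem_univ, true_and]
  rfl

theorem permPairs_injective : Function.Injective (permPairs n) := by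
  intro π σ h
  ext i
  have hi : ((i : ℕ) + 1, n + (π i : ℕ) + 1) ∈ permPairs n σ := h ▸ mem_permPairs.mpr ⟨i, rfl⟩
  obtain ⟨j, hj⟩ := mem_permPairs.mp hi
  simp only [Prod.mk.injEq] at hj
  obtain rfl : j = i := Fin.ext (by omega)
  omega

theorem count_displacements (π : Equiv.Perm (Fin n)) (k : ℕ) :
    (displacements n π).count k = diagXray n π k := by
  rw [displacements, Multiset.count_map, diagXray, card_def, filter_val]
  congr 1
  refine Multiset.filter_congr fun i _ => ?_
  have := i.isLt
  omega

theorem mem_displacements {π : Equiv.Perm (Fin n)} {k : ℕ} (hk : k ∈ displacements n π) :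
    1 ≤ k ∧ k ≤ 2 * n - 1 := by
  obtain ⟨i, -, rfl⟩ := Multiset.mem_map.mp hk
  have := i.isLt
  have := (π i).isLt
  omega

theorem displacements_eq_iff {π : Equiv.Perm (Fin n)} {A : Multiset ℕ}
    (hA : Multiset.card A = n) :
    displacements n π = A ↔
      ∀ k : ℕ, 1 ≤ k → k ≤ 2 * n - 1 → diagXray n π k = A.count k := by
  refine ⟨fun h k _ _ => h ▸ (count_displacements π k).symm, fun h => ?_⟩
  refine Multiset.eq_of_le_of_card_le (Multiset.le_iff_count.mpr fun k => ?_)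
    (by simp [hA, displacements])
  by_cases hk : k ∈ displacements n π
  · obtain ⟨h1, h2⟩ := mem_displacements hk
    rw [count_displacements, h k h1 h2]
  · simp [Multiset.count_eq_zero.mpr hk]

theorem map_add_one_range_two_mul (n : ℕ) :
    (Multiset.range (2 * n)).map (· + 1) =
      (Multiset.range n).map (· + 1) + (Multiset.range n).map (n + · + 1) := by
  rw [two_mul, Multiset.range_add, Multiset.map_add, Multiset.map_map]
  rfl

theorem permPairs_map_sub (π : Equiv.Perm (Fin n)) :
    (permPairs n π).val.map (fun p => p.2 - p.1) = displacements n π := by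
  rw [permPairs_val, Multiset.map_map, displacements]
  exact Multiset.map_congr rfl fun i _ => by simp only [Function.comp]; omega

theorem permPairs_mem_skolemPartitions (π : Equiv.Perm (Fin n)) :
    permPairs n π ∈ skolemPartitions n (displacements n π) := by
  refine ⟨fun q hq => ?_, ?_, ?_⟩
  · obtain ⟨i, rfl⟩ := mem_permPairs.mp hq
    omega
  · have hperm : univ.val.map (fun i : Fin n => n + (π i : ℕ) + 1) =
        univ.val.map (fun i : Fin n => n + (i : ℕ) + 1) := by
      conv_rhs => rw [← Multiset.map_univ_val_equiv π, Multiset.map_map]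
      rfl
    rw [Multiset.bind_pair, permPairs_val, Multiset.map_map, Multiset.map_map,
      map_add_one_range_two_mul, ← Fin.univ_val_map_val, Multiset.map_map, Multiset.map_map]
    exact congrArg₂ (· + ·) rfl hperm
  · exact permPairs_map_sub π

theorem map_fst_snd_of_mem_skolemPartitions {A : Multiset ℕ} {P : Finset (ℕ × ℕ)}
    (hP : P ∈ skolemPartitions n A) (hA : A.sum = n ^ 2) :
    P.val.map Prod.fst = (Multiset.range n).map (· + 1) ∧
      P.val.map Prod.snd = (Multiset.range n).map (n + · + 1) := by
  obtain ⟨hlt, hcover, hsub⟩ := hP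
  rw [Multiset.bind_pair] at hcover
  set S := P.val.map Prod.fst
  set T := P.val.map Prod.snd
  have hnodup : (S + T).Nodup := hcover ▸ (Multiset.nodup_range _).map (add_left_injective 1)
  have hpos : ∀ x ∈ S, 0 < x := fun x hx => by
    obtain ⟨y, -, rfl⟩ := Multiset.mem_map.mp (hcover ▸ Multiset.mem_add.mpr (Or.inl hx))
    omega
  rw [map_add_one_range_two_mul] at hcover
  set L := (Multiset.range n).map (· + 1)
  set U := (Multiset.range n).map (n + · + 1)
  have hcard : Multiset.card S = n := by
    have := congrArg Multiset.card hcover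
    simp only [Multiset.card_add, Multiset.card_map, Multiset.card_range, S, T, L, U] at this ⊢
    omega
  have hT : T.sum = S.sum + n ^ 2 := by
    rw [← hA, ← hsub, ← Multiset.sum_map_add]
    exact congrArg Multiset.sum (Multiset.map_congr rfl fun p hp => by have := hlt p hp; omega)
  have hU : U.sum = L.sum + n ^ 2 := by
    simp only [U, L]
    rw [← Finset.range_val, ← Finset.sum_eq_multiset_sum, ← Finset.sum_eq_multiset_sum,
      Finset.sum_add_distrib, Finset.sum_add_distrib (f := fun _ => n)]
    simp only [Finset.sum_add_distrib, Finset.sum_const, Finset.card_range, smul_eq_mul]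
    ring
  have hS : S = L := by
    have hS_sum : S.sum ≤ L.sum := by
      have := congrArg Multiset.sum hcover
      rw [Multiset.sum_add, Multiset.sum_add] at this
      omega
    have := Multiset.eq_map_range_of_sum_le
      (Multiset.nodup_of_le (Multiset.le_add_right _ _) hnodup) hpos (hcard ▸ hS_sum)
    rwa [hcard] at this
  exact ⟨hS, add_left_cancel (hS ▸ hcover)⟩

theorem exists_permPairs_eq {P : Finset (ℕ × ℕ)}
    (hfst : P.val.map Prod.fst = (Multiset.range n).map (· + 1))
    (hsnd : P.val.map Prod.snd = (Multiset.range n).map (n + · + 1)) :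
    ∃ π, permPairs n π = P := by
  have hfst_mem : ∀ i : Fin n, ∃ q ∈ P, q.1 = i + 1 := fun i => by
    have : (i : ℕ) + 1 ∈ P.val.map Prod.fst := by
      rw [hfst]
      exact Multiset.mem_map_of_mem _ (Multiset.mem_range.mpr i.isLt)
    simpa using this
  choose p hpP hp1 using hfst_mem
  have hsnd_bounds : ∀ q ∈ P, n < q.2 ∧ q.2 ≤ 2 * n := fun q hq => by
    obtain ⟨x, hx, hxq⟩ := Multiset.mem_map.mp (hsnd ▸ Multiset.mem_map_of_mem Prod.snd hq)
    have := Multiset.mem_range.mp hx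
    omega
  have hsnd_inj : ∀ q ∈ P, ∀ r ∈ P, q.2 = r.2 → q = r :=
    Multiset.inj_on_of_nodup_map (hsnd ▸ (Multiset.nodup_range n).map fun _ _ h => by omega)
  let f : Fin n → Fin n := fun i =>
    ⟨(p i).2 - (n + 1), by have := hsnd_bounds _ (hpP i); omega⟩
  have hf : Function.Injective f := fun i j hij => by
    have hi := hsnd_bounds _ (hpP i)
    have hj := hsnd_bounds _ (hpP j)
    have hpij := hsnd_inj _ (hpP i) _ (hpP j) (by simp only [Fin.ext_iff, f] at hij; omega)
    have h := hp1 i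
    rw [hpij, hp1 j] at h
    exact Fin.ext (by omega)
  refine ⟨Equiv.ofBijective f hf.bijective_of_finite, eq_of_subset_of_card_le ?_ ?_⟩
  · intro q hq
    obtain ⟨i, rfl⟩ := mem_permPairs.mp hq
    convert hpP i using 1
    have := hsnd_bounds _ (hpP i)
    ext
    · exact (hp1 i).symm
    · simp only [Equiv.ofBijective_apply, f]
      omega
  · simpa [permPairs] using (congrArg Multiset.card hsnd).le

theorem image_permPairs {A : Multiset ℕ} (hA : A.sum = n ^ 2) :
    permPairs n '' {π | displacements n π = A} = skolemPartitions n A := by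
  ext P
  refine ⟨?_, fun hP => ?_⟩
  · rintro ⟨π, rfl, rfl⟩
    exact permPairs_mem_skolemPartitions π
  · obtain ⟨hfst, hsnd⟩ := map_fst_snd_of_mem_skolemPartitions hP hA
    obtain ⟨π, rfl⟩ := exists_permPairs_eq hfst hsnd
    exact ⟨π, (permPairs_map_sub π).symm.trans hP.2.2, rfl⟩

end PermPairs

theorem stmt2_general (n : ℕ) (a : Fin n → ℕ) (ha_sum : ∑ i, a i = n ^ 2) :
    (skolemPartitions n (Multiset.map a (Finset.univ : Finset (Fin n)).val)).ncard =
      {π : Equiv.Perm (Fin n) | ∀ k : ℕ, 1 ≤ k → k ≤ 2 * n - 1 →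
        diagXray n π k =
          Multiset.count k (Multiset.map a (Finset.univ : Finset (Fin n)).val)}.ncard := by
  set A := Multiset.map a (Finset.univ : Finset (Fin n)).val
  have hcard : Multiset.card A = n := by simp [A]
  have hperms : {π : Equiv.Perm (Fin n) | ∀ k : ℕ, 1 ≤ k → k ≤ 2 * n - 1 →
      diagXray n π k = A.count k} = {π | displacements n π = A} :=
    Set.ext fun π => (displacements_eq_iff hcard).symm
  rw [hperms, ← image_permPairs ha_sum, permPairs_injective.injOn.ncard_image]

theorem stmt2 (n : ℕ) (hn : 0 < n) (a : Fin n → ℕ)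
    (ha_pos : ∀ i, 0 < a i) (ha_sum : ∑ i, a i = n ^ 2) :
    (skolemPartitions n (Multiset.map a (Finset.univ : Finset (Fin n)).val)).ncard =
      {π : Equiv.Perm (Fin n) | ∀ k : ℕ, 1 ≤ k → k ≤ 2 * n - 1 →
        diagXray n π k =
          Multiset.count k (Multiset.map a (Finset.univ : Finset (Fin n)).val)}.ncard :=
  stmt2_general n a ha_sum
end

section
/- The set {1, 2, …, 12} cannot be partitioned into 6 pairs (s_i, t_i) with s_i < t_i whose differences t_i − s_i form the multiset {4, 4, 4, 8, 8, 8}, even though this multiset has sum 36 = 6², an even number of even elements, and satisfies the density conditions: for the nondecreasing arrangement a_1 ≤ … ≤ a_6 = (4, 4, 4, 8, 8, 8), one has a_m + a_{m+1} + … + a_6 ≤ 36 − (m−1)² for each m = 1, …, 6. Hence the multiset {4, 4, 4, 8, 8, 8} is not an extremal multi Skolem set. -/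
/-- The multiset `{4, 4, 4, 8, 8, 8}`, given by its nondecreasing arrangement. -/
def a8 : Fin 6 → ℕ := ![4, 4, 4, 8, 8, 8]

/-!
Every prescribed difference is a multiple of 4, so each pair lies inside a single residue class
mod 4, and every residue class is therefore covered by an even number of endpoints. But the
class of 1 mod 4 in `{1, …, 12}` is `{1, 5, 9}`, of odd size.
-/

lemma even_countP_pairsMultiset {n : ℕ} {s t : Fin n → ℕ} (p : ℕ → Prop) [DecidablePred p]
    (h : ∀ i, p (s i) ↔ p (t i)) : Even ((pairsMultiset n s t).countP p) := by
  rw [pairsMultiset, Multiset.countP_eq_card_filter, Multiset.filter_bind, Multiset.card_bind]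
  refine Finset.even_sum _ fun i _ => ?_
  simp only [Function.comp_apply, Multiset.insert_eq_cons, Multiset.filter_cons,
    Multiset.filter_singleton, h i]
  split_ifs <;> simp

lemma not_isPartitionOfIcc_of_dvd_sub {n d r : ℕ} {s t : Fin n → ℕ} (hle : ∀ i, s i ≤ t i)
    (hdvd : ∀ i, d ∣ t i - s i)
    (hodd : Odd (((Multiset.range (2 * n)).map (· + 1)).countP (· % d = r))) :
    ¬ IsPartitionOfIcc n s t := by
  intro hpart
  have hmod (i : Fin n) : s i % d = r ↔ t i % d = r := by
    rw [(Nat.modEq_iff_dvd' (hle i)).2 (hdvd i)]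
  rw [IsPartitionOfIcc] at hpart
  exact Nat.not_even_iff_odd.2 hodd (hpart ▸ even_countP_pairsMultiset _ hmod)

theorem stmt8 :
    (∑ i, a8 i = 36) ∧
      Even (Finset.univ.filter fun i => Even (a8 i)).card ∧
      (∀ m : Fin 6, ∑ i ∈ Finset.univ.filter (fun i => m ≤ i), a8 i ≤ 36 - (m : ℕ) ^ 2) ∧
      ¬ ∃ s t : Fin 6 → ℕ, IsPartitionOfIcc 6 s t ∧ (∀ i, s i < t i) ∧
        Multiset.map (fun i => t i - s i) (Finset.univ : Finset (Fin 6)).val =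
          Multiset.map a8 (Finset.univ : Finset (Fin 6)).val := by
  refine ⟨by decide, by decide, by decide, ?_⟩
  rintro ⟨s, t, hpart, hlt, hdiff⟩
  have hdvd (i : Fin 6) : 4 ∣ t i - s i := by
    obtain ⟨j, -, hj⟩ := Multiset.mem_map.1 (hdiff ▸ Multiset.mem_map_of_mem _ (Finset.mem_univ i))
    rw [← hj]
    fin_cases j <;> decide
  exact not_isPartitionOfIcc_of_dvd_sub (r := 1) (fun i => (hlt i).le) hdvd (by decide) hpart
end

section
/- Let A = {a_1, a_2, …, a_n} be a multi Skolem set with its elements arranged in nondecreasing order a_1 ≤ a_2 ≤ … ≤ a_n. Then for each m with 1 ≤ m ≤ n, one has a_m + a_{m+1} + … + a_n ≤ n² − (m−1)². -/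
/-!
Any `k` of the pairs have distinct right endpoints in `[1, 2n]` and distinct left endpoints in
`[1, 2n]`, so the sum of their differences is at most
`(2n + (2n - 1) + ⋯ + (2n - k + 1)) - (1 + 2 + ⋯ + k) = k (2n - k) = n² - (n - k)²`.
The terms `a_i` with `i ≥ m` are the differences of `n - m` of the pairs.
-/

open Finset

lemma Tuple.exists_perm_eq_comp_of_map_univ_eq {α : Type*} [LinearOrder α] {n : ℕ}
    {f g : Fin n → α} (h : univ.val.map f = univ.val.map g) :
    ∃ σ : Equiv.Perm (Fin n), f = g ∘ σ := by
  have hperm : (List.ofFn f).Perm (List.ofFn g) := by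
    rw [← Multiset.coe_eq_coe, ← Fin.univ_val_map, ← Fin.univ_val_map, h]
  have hsorted : f ∘ Tuple.sort f = g ∘ Tuple.sort g :=
    List.ofFn_injective <| List.Perm.eq_of_sortedLE
      (Tuple.monotone_sort f).sortedLE_ofFn (Tuple.monotone_sort g).sortedLE_ofFn <|
      (Equiv.Perm.ofFn_comp_perm _ f).trans <| hperm.trans (Equiv.Perm.ofFn_comp_perm _ g).symm
  refine ⟨(Tuple.sort f).symm.trans (Tuple.sort g), funext fun i => ?_⟩
  simpa using congrFun hsorted ((Tuple.sort f).symm i)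

lemma Finset.sum_range_sub_sub_sum_range (N : ℤ) (k : ℕ) :
    ∑ j ∈ range k, (N - j) - ∑ j ∈ range k, (1 + j : ℤ) = k * (N - k) := by
  induction k with
  | zero => simp
  | succ k ih => simp only [sum_range_succ]; push_cast; linarith

lemma Finset.sum_sub_le_of_injOn {ι : Type*} (S : Finset ι) {s t : ι → ℤ} {N : ℤ}
    (hs : Set.InjOn s S) (ht : Set.InjOn t S) (hs_pos : ∀ i ∈ S, 1 ≤ s i)
    (ht_le : ∀ i ∈ S, t i ≤ N) :
    ∑ i ∈ S, (t i - s i) ≤ #S * (N - #S) := by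
  classical
  have ht_sum : ∑ i ∈ S, t i ≤ ∑ j ∈ range #S, (N - j) := by
    have := sum_le_sum_range (s := S.image t) (c := N) (by simpa using ht_le)
    rwa [sum_image ht, card_image_of_injOn ht] at this
  have hs_sum : ∑ j ∈ range #S, (1 + j : ℤ) ≤ ∑ i ∈ S, s i := by
    have := sum_range_le_sum (s := S.image s) (c := 1) (by simpa using hs_pos)
    rwa [sum_image hs, card_image_of_injOn hs] at this
  rw [sum_sub_distrib, ← sum_range_sub_sub_sum_range]
  omega

namespace IsPartitionOfIcc

variable {n : ℕ} {s t : Fin n → ℕ}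

lemma mem_Icc (h : IsPartitionOfIcc n s t) (i : Fin n) {x : ℕ}
    (hx : x ∈ ({s i, t i} : Multiset ℕ)) : x ∈ Set.Icc 1 (2 * n) := by
  replace hx : x ∈ pairsMultiset n s t := Multiset.mem_bind.mpr ⟨i, mem_univ_val i, hx⟩
  rw [h] at hx
  obtain ⟨y, hy, rfl⟩ := Multiset.mem_map.mp hx
  simp only [Multiset.mem_range] at hy
  constructor <;> omega

lemma disjoint (h : IsPartitionOfIcc n s t) {i j : Fin n} (hij : i ≠ j) :
    Disjoint ({s i, t i} : Multiset ℕ) {s j, t j} := by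
  have hnodup : (pairsMultiset n s t).Nodup := by
    rw [h]
    exact (Multiset.nodup_range _).map fun x y hxy => by omega
  exact (Multiset.nodup_bind.mp hnodup).2.forall (mem_univ_val i) (mem_univ_val j) hij

lemma injective_fst (h : IsPartitionOfIcc n s t) : Function.Injective s := fun i j hij =>
  by_contra fun hne => Multiset.disjoint_left.mp (h.disjoint hne)
    (by simp : s i ∈ ({s i, t i} : Multiset ℕ)) (by simp [hij])

lemma injective_snd (h : IsPartitionOfIcc n s t) : Function.Injective t := fun i j hij =>
  by_contra fun hne => Multiset.disjoint_left.mp (h.disjoint hne)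
    (by simp : t i ∈ ({s i, t i} : Multiset ℕ)) (by simp [hij])

lemma sum_sub_add_sq_le (h : IsPartitionOfIcc n s t) (hst : ∀ i, s i < t i)
    (S : Finset (Fin n)) : ∑ i ∈ S, (t i - s i) + (n - #S) ^ 2 ≤ n ^ 2 := by
  have hS : #S ≤ n := (card_le_univ S).trans_eq (Fintype.card_fin n)
  have hbound := S.sum_sub_le_of_injOn (s := fun i => (s i : ℤ)) (t := fun i => (t i : ℤ))
    (N := 2 * n) (Nat.cast_injective.comp h.injective_fst).injOn
    (Nat.cast_injective.comp h.injective_snd).injOn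
    (fun i _ => mod_cast (h.mem_Icc i (by simp)).1)
    (fun i _ => mod_cast (h.mem_Icc i (by simp)).2)
  zify [hS, fun i => (hst i).le]
  linear_combination hbound

end IsPartitionOfIcc

theorem stmt9_general (n : ℕ) (a : Fin n → ℕ)
    (hA : ∃ s t : Fin n → ℕ, IsPartitionOfIcc n s t ∧ (∀ i, s i < t i) ∧
      Multiset.map (fun i => t i - s i) (Finset.univ : Finset (Fin n)).val =
        Multiset.map a (Finset.univ : Finset (Fin n)).val) :
    ∀ m : Fin n, ∑ i ∈ Finset.univ.filter (fun i => m ≤ i), a i ≤ n ^ 2 - (m : ℕ) ^ 2 := by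
  obtain ⟨s, t, hpart, hst, hmap⟩ := hA
  obtain ⟨σ, rfl⟩ := Tuple.exists_perm_eq_comp_of_map_univ_eq hmap.symm
  intro m
  have hcard : #(univ.filter (m ≤ ·)) = n - m := by rw [filter_le_eq_Ici, Fin.card_Ici]
  have hS := hpart.sum_sub_add_sq_le hst ((univ.filter (m ≤ ·)).map σ.toEmbedding)
  rw [sum_map, card_map, hcard, Nat.sub_sub_self m.is_lt.le] at hS
  exact Nat.le_sub_of_add_le hS

theorem stmt9 (n : ℕ) (a : Fin n → ℕ) (ha_pos : ∀ i, 0 < a i) (ha_mono : Monotone a)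
    (hA : ∃ s t : Fin n → ℕ, IsPartitionOfIcc n s t ∧ (∀ i, s i < t i) ∧
      Multiset.map (fun i => t i - s i) (Finset.univ : Finset (Fin n)).val =
        Multiset.map a (Finset.univ : Finset (Fin n)).val) :
    ∀ m : Fin n, ∑ i ∈ Finset.univ.filter (fun i => m ≤ i), a i ≤ n ^ 2 - (m : ℕ) ^ 2 :=
  stmt9_general n a hA
end

section
/- Let A = {a_1, a_2, …, a_n} be a multi Skolem set. Then the number of indices i with a_i even is even. -/
open Finset

theorem Finset.even_card_filter_even_iff {ι : Type*} (s : Finset ι) (f : ι → ℕ) :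
    Even #{x ∈ s | Even (f x)} ↔ (Even #s ↔ Even (∑ x ∈ s, f x)) := by
  have hcard : #{x ∈ s | Even (f x)} + #{x ∈ s | Odd (f x)} = #s := by
    simpa only [Nat.not_even_iff_odd] using card_filter_add_card_filter_not (s := s) (Even <| f ·)
  rw [even_sum_iff_even_card_odd, ← hcard, Nat.even_add]
  tauto

theorem even_sum_tsub_iff {ι : Type*} (I : Finset ι) {s t : ι → ℕ} (hst : ∀ i ∈ I, s i ≤ t i) :
    Even (∑ i ∈ I, (t i - s i)) ↔ Even (∑ i ∈ I, (s i + t i)) := by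
  have hsum : ∑ i ∈ I, (s i + t i) = ∑ i ∈ I, (t i - s i) + 2 * ∑ i ∈ I, s i := by
    rw [mul_sum, ← sum_add_distrib]
    refine sum_congr rfl fun i hi => ?_
    have := hst i hi
    omega
  simp [hsum, Nat.even_add]

theorem sum_map_succ_range_two_mul (n : ℕ) :
    (Multiset.map (· + 1) (Multiset.range (2 * n))).sum = n * (2 * n + 1) := by
  induction n with
  | zero => rfl
  | succ n ih =>
    rw [show 2 * (n + 1) = 2 * n + 1 + 1 by ring]
    simp only [Multiset.range_succ, Multiset.map_cons, Multiset.sum_cons, ih]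
    ring

theorem sum_pairsMultiset (n : ℕ) (s t : Fin n → ℕ) :
    (pairsMultiset n s t).sum = ∑ i, (s i + t i) := by
  rw [pairsMultiset, Multiset.sum_bind, Finset.sum]
  simp

theorem IsPartitionOfIcc.sum_add {n : ℕ} {s t : Fin n → ℕ} (h : IsPartitionOfIcc n s t) :
    ∑ i, (s i + t i) = n * (2 * n + 1) := by
  rw [← sum_pairsMultiset, h, sum_map_succ_range_two_mul]

theorem IsPartitionOfIcc.even_sum_tsub_iff {n : ℕ} {s t : Fin n → ℕ} (h : IsPartitionOfIcc n s t)
    (hlt : ∀ i, s i < t i) : Even (∑ i, (t i - s i)) ↔ Even n := by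
  rw [_root_.even_sum_tsub_iff _ fun i _ => (hlt i).le, h.sum_add, Nat.even_mul]
  simp [parity_simps]

theorem stmt10_general (n : ℕ) (a : Fin n → ℕ)
    (hA : ∃ s t : Fin n → ℕ, IsPartitionOfIcc n s t ∧ (∀ i, s i < t i) ∧
      Multiset.map (fun i => t i - s i) (Finset.univ : Finset (Fin n)).val =
        Multiset.map a (Finset.univ : Finset (Fin n)).val) :
    Even (Finset.univ.filter fun i => Even (a i)).card := by
  obtain ⟨s, t, hpart, hlt, hdiff⟩ := hA
  have hsum : ∑ i, (t i - s i) = ∑ i, a i := congrArg Multiset.sum hdiff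
  have hparity : Even (∑ i, a i) ↔ Even n := hsum ▸ hpart.even_sum_tsub_iff hlt
  rw [even_card_filter_even_iff, card_univ, Fintype.card_fin]
  tauto

theorem stmt10 (n : ℕ) (a : Fin n → ℕ) (ha_pos : ∀ i, 0 < a i)
    (hA : ∃ s t : Fin n → ℕ, IsPartitionOfIcc n s t ∧ (∀ i, s i < t i) ∧
      Multiset.map (fun i => t i - s i) (Finset.univ : Finset (Fin n)).val =
        Multiset.map a (Finset.univ : Finset (Fin n)).val) :
    Even (Finset.univ.filter fun i => Even (a i)).card :=
  stmt10_general n a hA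
end

section
/- Let π be a permutation of {1, …, n} and let (a_1, a_2, …, a_n) with a_1 ≤ a_2 ≤ … ≤ a_n be the Toeplitz characteristic of π. Then a_1 + a_2 + … + a_k ≥ k² for each k with 1 ≤ k ≤ n, and a_1 + a_2 + … + a_n = n². -/
/-- `(a 0, …, a (n-1))` is the Toeplitz characteristic of `π`: it is nondecreasing
and every index `k` occurs in it exactly `d_k` times. -/
def IsToeplitzChar (n : ℕ) (π : Equiv.Perm (Fin n)) (a : Fin n → ℕ) : Prop :=
  Monotone a ∧ ∀ k : ℕ, (Finset.univ.filter fun i => a i = k).card = diagXray n π k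

/-!
Position `i` of `π` lies on diagonal `π i + (n - 1 - i) + 1` of the X-ray (`diagIndex`), so the
Toeplitz characteristic is a rearrangement of these diagonal indices. For any `m` positions, the
values `π i` are `m` distinct naturals and so are the values `n - 1 - i`, so each of the two sums is at least
`0 + 1 + ⋯ + (m - 1)`; hence the `m` diagonal indices sum to at least `m (m - 1) + m = m²`,
with equality when all `n` positions are taken.
-/

open Finset

theorem Finset.sum_range_card_le_sum (s : Finset ℕ) : ∑ j ∈ range #s, j ≤ ∑ x ∈ s, x := by
  induction s using Finset.induction_on_max with
  | empty => simp
  | insert a s ha ih =>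
    have ha' : a ∉ s := fun h => lt_irrefl a (ha a h)
    have hcard : #s ≤ a := by
      simpa using card_le_card fun x hx => mem_range.2 (ha x hx)
    rw [card_insert_of_notMem ha', sum_range_succ, sum_insert ha']
    omega

theorem Finset.sum_range_card_le_sum_of_injOn {ι : Type*} (s : Finset ι) {f : ι → ℕ}
    (hf : Set.InjOn f s) : ∑ j ∈ range #s, j ≤ ∑ i ∈ s, f i := by
  simpa [card_image_of_injOn hf, sum_image hf] using sum_range_card_le_sum (s.image f)

theorem Finset.exists_equiv_apply_eq_of_card_filter_eq {ι β : Type*} [Fintype ι] [DecidableEq β]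
    {f g : ι → β} (h : ∀ b, #{i | f i = b} = #{i | g i = b}) :
    ∃ σ : ι ≃ ι, ∀ i, g (σ i) = f i :=
  ⟨Equiv.ofFiberEquiv fun b => Fintype.equivOfCardEq (by simpa [Fintype.card_subtype] using h b),
    Equiv.ofFiberEquiv_map _⟩

theorem sq_eq_sum_range_mul_two_add (m : ℕ) : m ^ 2 = (∑ j ∈ range m, j) * 2 + m := by
  rw [sum_range_id_mul_two]
  cases m with
  | zero => rfl
  | succ m => rw [Nat.add_sub_cancel]; ring

namespace Equiv.Perm

variable {n : ℕ} (π : Equiv.Perm (Fin n))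

def diagIndex (i : Fin n) : ℕ := π i + i.rev + 1

theorem diagXray_eq_card_diagIndex (k : ℕ) : diagXray n π k = #{i | π.diagIndex i = k} := by
  refine congrArg card (filter_congr fun i _ => ?_)
  have := i.val_rev
  have := i.isLt
  simp only [diagIndex]
  omega

theorem sq_card_le_sum_diagIndex (s : Finset (Fin n)) : #s ^ 2 ≤ ∑ i ∈ s, π.diagIndex i := by
  have hπ := s.sum_range_card_le_sum_of_injOn (Fin.val_injective.comp π.injective).injOn
  have hrev := s.sum_range_card_le_sum_of_injOn (Fin.val_injective.comp Fin.rev_injective).injOn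
  simp only [diagIndex, sum_add_distrib, sum_const, smul_eq_mul, mul_one, Function.comp_def]
    at hπ hrev ⊢
  rw [sq_eq_sum_range_mul_two_add]
  omega

theorem sum_diagIndex : ∑ i, π.diagIndex i = n ^ 2 := by
  have hπ : ∑ i, (π i : ℕ) = ∑ j ∈ range n, j :=
    (Equiv.sum_comp π (fun i => (i : ℕ))).trans (Fin.sum_univ_eq_sum_range (fun j => j) n)
  have hrev : ∑ i : Fin n, (i.rev : ℕ) = ∑ j ∈ range n, j :=
    (Equiv.sum_comp Fin.revPerm (fun i => (i : ℕ))).trans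
      (Fin.sum_univ_eq_sum_range (fun j => j) n)
  simp only [diagIndex, sum_add_distrib, sum_const, card_univ, Fintype.card_fin, smul_eq_mul,
    mul_one, hπ, hrev, sq_eq_sum_range_mul_two_add n]
  ring

end Equiv.Perm

theorem stmt11 (n : ℕ) (π : Equiv.Perm (Fin n)) (a : Fin n → ℕ)
    (ha : IsToeplitzChar n π a) :
    (∀ k : Fin n, ((k : ℕ) + 1) ^ 2 ≤ ∑ i ∈ Finset.univ.filter (fun i => i ≤ k), a i) ∧
      ∑ i, a i = n ^ 2 := by
  obtain ⟨-, hcount⟩ := ha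
  obtain ⟨σ, hσ⟩ := exists_equiv_apply_eq_of_card_filter_eq (f := a) (g := π.diagIndex)
    fun k => by rw [hcount, π.diagXray_eq_card_diagIndex]
  have hsum (s : Finset (Fin n)) : ∑ i ∈ s, a i = ∑ j ∈ s.map σ.toEmbedding, π.diagIndex j := by
    simp [hσ]
  refine ⟨fun k => ?_, ?_⟩
  · simpa [hsum, filter_ge_eq_Iic] using π.sq_card_le_sum_diagIndex ((Iic k).map σ.toEmbedding)
  · simpa [hsum] using π.sum_diagIndex
end

section
/- Let D be an n × n doubly stochastic real matrix whose diagonal X-ray d(D) = (d_1, …, d_{2n−1}) is binary, i.e., d_k ∈ {0, 1} for all k, and let a_1 < a_2 < … < a_n be the indices k with d_k = 1 (there are exactly n such indices). Then a_1 + a_2 + … + a_k ≥ k² for each k with 1 ≤ k ≤ n, and a_1 + a_2 + … + a_n = n². -/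
/-!
Let `S` be a set of diagonals on which the X-ray equals `1`, and let `E` be the part of `D`
supported on them. The diagonal through `(p, q)` has index `(n - 1 - p) + q + 1`, so
`∑_{t ∈ S} t = ∑_{p,q} ((n - 1 - p) + q + 1) E p q`. The row masses of `E` lie in `[0, 1]`
and add up to `|S|`, so `∑_p (2 (n - 1 - p) + 1) · (row mass p) ≥ |S|²`: the mass is cheapest
when packed into the `|S|` slots of smallest weight, whose odd weights add up to `|S|²`.
The same holds for the columns, and averaging the two gives `∑_{t ∈ S} t ≥ |S|²`.
Conversely, for doubly stochastic `D` the full weighted sum `∑_{p,q} (n - p + q) D p q`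
equals `n²`, and it dominates `∑_{t ∈ S} t`.
-/

/-- The `k`-th entry of the diagonal X-ray of an `n × n` real matrix `D`
(indices encoded 0-based): `d_k = Σ_{i - j = n - k} D i j`. -/
def dsDiagXray (n : ℕ) (D : Matrix (Fin n) (Fin n) ℝ) (k : ℤ) : ℝ :=
  ∑ i : Fin n, ∑ j : Fin n,
    if ((i : ℕ) : ℤ) - ((j : ℕ) : ℤ) = (n : ℤ) - k then D i j else 0

open Finset

lemma sum_range_two_mul_add_one (K : ℕ) : ∑ i ∈ range K, (2 * (i : ℝ) + 1) = (K : ℝ) ^ 2 := by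
  induction K with
  | zero => simp
  | succ K ih => rw [sum_range_succ, ih]; push_cast; ring

lemma sum_range_max_le_sq (n K : ℕ) :
    ∑ i ∈ range n, max (2 * (K : ℝ) - (2 * i + 1)) 0 ≤ (K : ℝ) ^ 2 := by
  set φ : ℕ → ℝ := fun i => max (2 * (K : ℝ) - (2 * i + 1)) 0
  have hlow : ∀ i ∈ range K, φ i = 2 * (K : ℝ) - (2 * i + 1) := fun i hi => by
    have : (i : ℝ) + 1 ≤ K := by exact_mod_cast mem_range.1 hi
    exact max_eq_left (by linarith)
  have hhigh : ∀ i : ℕ, φ (K + i) = 0 := fun i =>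
    max_eq_right (by push_cast; linarith [i.cast_nonneg (α := ℝ)])
  calc ∑ i ∈ range n, φ i ≤ ∑ i ∈ range (K + n), φ i :=
        sum_le_sum_of_subset_of_nonneg (range_subset_range.2 (by omega))
          fun _ _ _ => le_max_right _ _
    _ = ∑ i ∈ range K, φ i + ∑ i ∈ range n, φ (K + i) := sum_range_add φ K n
    _ = (K : ℝ) ^ 2 := by
        rw [sum_congr rfl hlow, sum_sub_distrib, sum_range_two_mul_add_one]
        simp [hhigh]
        ring

lemma sq_le_sum_two_mul_add_one_mul {n K : ℕ} (σ : Equiv.Perm (Fin n)) (r : Fin n → ℝ)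
    (hr0 : ∀ i, 0 ≤ r i) (hr1 : ∀ i, r i ≤ 1) (hK : (K : ℝ) ≤ ∑ i, r i) :
    (K : ℝ) ^ 2 ≤ ∑ i, (2 * ((σ i : ℕ) : ℝ) + 1) * r i := by
  set φ : ℕ → ℝ := fun i => max (2 * (K : ℝ) - (2 * i + 1)) 0
  have hpoint : ∀ i, 2 * K * r i - φ (σ i) ≤ (2 * ((σ i : ℕ) : ℝ) + 1) * r i := fun i => by
    have h1 : (2 * K - (2 * ((σ i : ℕ) : ℝ) + 1)) * r i ≤ φ (σ i) * r i :=
      mul_le_mul_of_nonneg_right (le_max_left _ _) (hr0 i)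
    have h2 : φ (σ i) * r i ≤ φ (σ i) := mul_le_of_le_one_right (le_max_right _ _) (hr1 i)
    linarith
  have hφ : ∑ i, φ (σ i) ≤ (K : ℝ) ^ 2 := by
    rw [Equiv.sum_comp σ (fun i => φ i), Fin.sum_univ_eq_sum_range φ n]
    exact sum_range_max_le_sq n K
  calc (K : ℝ) ^ 2 ≤ 2 * K * ∑ i, r i - ∑ i, φ (σ i) := by
        nlinarith [K.cast_nonneg (α := ℝ)]
    _ = ∑ i, (2 * K * r i - φ (σ i)) := by rw [sum_sub_distrib, mul_sum]
    _ ≤ _ := sum_le_sum fun i _ => hpoint i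

lemma sq_le_sum_rev_add_mul {n K : ℕ} (E : Matrix (Fin n) (Fin n) ℝ)
    (hE0 : ∀ p q, 0 ≤ E p q) (hrow : ∀ p, ∑ q, E p q ≤ 1) (hcol : ∀ q, ∑ p, E p q ≤ 1)
    (hK : (K : ℝ) ≤ ∑ p, ∑ q, E p q) :
    (K : ℝ) ^ 2 ≤ ∑ p : Fin n, ∑ q : Fin n, (((p.rev : ℕ) : ℝ) + (q : ℕ) + 1) * E p q := by
  have hrows := sq_le_sum_two_mul_add_one_mul Fin.revPerm (fun p => ∑ q, E p q)
    (fun p => sum_nonneg fun q _ => hE0 p q) hrow hK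
  have hcols := sq_le_sum_two_mul_add_one_mul (Equiv.refl _) (fun q => ∑ p, E p q)
    (fun q => sum_nonneg fun p _ => hE0 p q) hcol (by rwa [sum_comm])
  have hsplit : 2 * ∑ p : Fin n, ∑ q : Fin n, (((p.rev : ℕ) : ℝ) + (q : ℕ) + 1) * E p q =
      ∑ p, (2 * ((Fin.revPerm p : ℕ) : ℝ) + 1) * ∑ q, E p q +
        ∑ q, (2 * ((Equiv.refl (Fin n) q : ℕ) : ℝ) + 1) * ∑ p, E p q := by
    simp only [Fin.revPerm_apply, Equiv.refl_apply, mul_sum]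
    rw [sum_comm (f := fun q p => _ * E p q), ← sum_add_distrib]
    refine sum_congr rfl fun p _ => ?_
    rw [← sum_add_distrib]
    exact sum_congr rfl fun q _ => by ring
  linarith

lemma sum_mul_dsDiagXray (n : ℕ) (D : Matrix (Fin n) (Fin n) ℝ) (S : Finset ℕ) (f : ℕ → ℝ) :
    ∑ t ∈ S, f t * dsDiagXray n D t =
      ∑ p : Fin n, ∑ q : Fin n,
        if (p.rev : ℕ) + q + 1 ∈ S then f ((p.rev : ℕ) + q + 1) * D p q else 0 := by
  simp only [dsDiagXray, mul_sum]
  rw [sum_comm]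
  refine sum_congr rfl fun p _ => ?_
  rw [sum_comm]
  refine sum_congr rfl fun q _ => ?_
  rw [← sum_ite_eq' S _ (fun t => f t * D p q)]
  refine sum_congr rfl fun t _ => ?_
  rw [mul_ite, mul_zero]
  refine if_congr ?_ rfl rfl
  have := p.isLt
  rw [Fin.val_rev]
  omega

lemma sum_rev_add_mul_eq_sq {n : ℕ} (D : Matrix (Fin n) (Fin n) ℝ)
    (hrow : ∀ p, ∑ q, D p q = 1) (hcol : ∀ q, ∑ p, D p q = 1) :
    ∑ p : Fin n, ∑ q : Fin n, (((p.rev : ℕ) : ℝ) + (q : ℕ) + 1) * D p q = (n : ℝ) ^ 2 := by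
  have hsplit : ∀ p : Fin n, ∑ q : Fin n, (((p.rev : ℕ) : ℝ) + (q : ℕ) + 1) * D p q =
      (((p.rev : ℕ) : ℝ) + 1) * ∑ q, D p q + ∑ q : Fin n, ((q : ℕ) : ℝ) * D p q := fun p => by
    rw [mul_sum, ← sum_add_distrib]
    exact sum_congr rfl fun q _ => by ring
  have hrev : ∀ p : Fin n, ((p.rev : ℕ) : ℝ) + 1 + (p : ℕ) = n := fun p => by
    have := p.isLt
    rw [Fin.val_rev]
    exact_mod_cast (by omega : n - (p + 1) + 1 + p = n)
  simp only [sum_congr rfl fun p _ => hsplit p, hrow, mul_one, sum_add_distrib]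
  rw [sum_comm]
  simp only [← mul_sum, hcol, mul_one, ← sum_add_distrib, hrev]
  simp [sq]

variable {n : ℕ} {D : Matrix (Fin n) (Fin n) ℝ}

lemma sum_cast_eq_of_dsDiagXray_eq_one (S : Finset ℕ) (hS : ∀ t ∈ S, dsDiagXray n D t = 1) :
    ∑ t ∈ S, (t : ℝ) = ∑ p : Fin n, ∑ q : Fin n,
      if (p.rev : ℕ) + q + 1 ∈ S then (((p.rev : ℕ) + q + 1 : ℕ) : ℝ) * D p q else 0 := by
  rw [← sum_mul_dsDiagXray]
  exact sum_congr rfl fun t ht => by rw [hS t ht, mul_one]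

lemma sq_card_le_sum_of_dsDiagXray_eq_one (hD0 : ∀ p q, 0 ≤ D p q)
    (hrow : ∀ p, ∑ q, D p q ≤ 1) (hcol : ∀ q, ∑ p, D p q ≤ 1)
    (S : Finset ℕ) (hS : ∀ t ∈ S, dsDiagXray n D t = 1) :
    (#S : ℝ) ^ 2 ≤ ∑ t ∈ S, (t : ℝ) := by
  set E : Matrix (Fin n) (Fin n) ℝ := fun p q => if (p.rev : ℕ) + q + 1 ∈ S then D p q else 0
  have hE0 : ∀ p q, 0 ≤ E p q := fun p q => by unfold E; split_ifs <;> simp [hD0]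
  have hED : ∀ p q, E p q ≤ D p q := fun p q => by unfold E; split_ifs <;> simp [hD0]
  have hmass : ∑ p, ∑ q, E p q = #S := by
    have := sum_mul_dsDiagXray n D S 1
    simp only [Pi.one_apply, one_mul, sum_congr rfl hS, sum_const, nsmul_one] at this
    exact this.symm
  have hmoment : ∑ p : Fin n, ∑ q : Fin n, (((p.rev : ℕ) : ℝ) + (q : ℕ) + 1) * E p q =
      ∑ t ∈ S, (t : ℝ) := by
    simp only [sum_cast_eq_of_dsDiagXray_eq_one S hS, E, mul_ite, mul_zero, Nat.cast_add,
      Nat.cast_one]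
  exact hmoment ▸ sq_le_sum_rev_add_mul E hE0
    (fun p => (sum_le_sum fun q _ => hED p q).trans (hrow p))
    (fun q => (sum_le_sum fun p _ => hED p q).trans (hcol q)) hmass.ge

lemma sum_le_sq_of_dsDiagXray_eq_one (hD0 : ∀ p q, 0 ≤ D p q)
    (hrow : ∀ p, ∑ q, D p q = 1) (hcol : ∀ q, ∑ p, D p q = 1)
    (S : Finset ℕ) (hS : ∀ t ∈ S, dsDiagXray n D t = 1) :
    ∑ t ∈ S, (t : ℝ) ≤ (n : ℝ) ^ 2 := by
  rw [← sum_rev_add_mul_eq_sq D hrow hcol, sum_cast_eq_of_dsDiagXray_eq_one S hS]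
  refine sum_le_sum fun p _ => sum_le_sum fun q _ => ?_
  split_ifs
  · push_cast; rfl
  · exact mul_nonneg (by positivity) (hD0 p q)

theorem stmt12_general (n : ℕ) (D : Matrix (Fin n) (Fin n) ℝ)
    (hD_nonneg : ∀ i j, 0 ≤ D i j)
    (hD_row : ∀ i, ∑ j, D i j = 1) (hD_col : ∀ j, ∑ i, D i j = 1)
    (a : Fin n → ℕ) (ha_mono : StrictMono a)
    (ha_one : ∀ i, dsDiagXray n D (a i) = 1) :
    (∀ k : Fin n, ((k : ℕ) + 1) ^ 2 ≤ ∑ i ∈ Finset.univ.filter (fun i => i ≤ k), a i) ∧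
      ∑ i, a i = n ^ 2 := by
  have hS : ∀ I : Finset (Fin n), ∀ t ∈ I.image a, dsDiagXray n D t = 1 := fun I t ht => by
    obtain ⟨i, -, rfl⟩ := mem_image.1 ht
    exact ha_one i
  have hsum : ∀ I : Finset (Fin n), ∑ t ∈ I.image a, (t : ℝ) = ∑ i ∈ I, (a i : ℝ) :=
    fun I => sum_image fun _ _ _ _ h => ha_mono.injective h
  have hlow : ∀ I : Finset (Fin n), #I ^ 2 ≤ ∑ i ∈ I, a i := fun I => by
    have := sq_card_le_sum_of_dsDiagXray_eq_one hD_nonneg (fun p => (hD_row p).le)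
      (fun q => (hD_col q).le) (I.image a) (hS I)
    rw [card_image_of_injective I ha_mono.injective, hsum] at this
    exact_mod_cast this
  have hup : ∑ i, a i ≤ n ^ 2 := by
    have := sum_le_sq_of_dsDiagXray_eq_one hD_nonneg hD_row hD_col (univ.image a) (hS univ)
    rw [hsum] at this
    exact_mod_cast this
  refine ⟨fun k => ?_, hup.antisymm (by simpa using hlow univ)⟩
  have hcard : #(univ.filter fun i => i ≤ k) = k + 1 := by
    rw [filter_ge_eq_Iic, Fin.card_Iic]
  simpa [hcard] using hlow (univ.filter fun i => i ≤ k)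

theorem stmt12 (n : ℕ) (hn : 0 < n) (D : Matrix (Fin n) (Fin n) ℝ)
    (hD_nonneg : ∀ i j, 0 ≤ D i j)
    (hD_row : ∀ i, ∑ j, D i j = 1) (hD_col : ∀ j, ∑ i, D i j = 1)
    (hbinary : ∀ k : ℤ, dsDiagXray n D k = 0 ∨ dsDiagXray n D k = 1)
    (a : Fin n → ℕ) (ha_mono : StrictMono a)
    (ha_one : ∀ i, dsDiagXray n D (a i) = 1)
    (ha_all : ∀ k : ℕ, 1 ≤ k → k ≤ 2 * n - 1 → dsDiagXray n D k = 1 → ∃ i, a i = k) :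
    (∀ k : Fin n, ((k : ℕ) + 1) ^ 2 ≤ ∑ i ∈ Finset.univ.filter (fun i => i ≤ k), a i) ∧
      ∑ i, a i = n ^ 2 :=
  stmt12_general n D hD_nonneg hD_row hD_col a ha_mono ha_one
end
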